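/- arXiv:1304.4922 — 7 statements merged into one kernel-verified Lean document; each statement's English description precedes it below -/
import Mathlib

section
/- Let n ≥ 1, A = (a_{ij}) ∈ M_n(ℂ), and t ≥ 0. Then S_t(AᴴA) − (S_t A)ᴴ (S_t A) = S_t(T(A)ᴴ T(A)) − (S_t T(A))ᴴ (S_t T(A)), i.e. S_t|A|² − |S_t A|² = S_t|T(A)|² − |S_t T(A)|² where |X|² = XᴴX. -/
/-!
Write `S = P ⊙ ·` with `P_{ij} = e^{-t|i-j|}` and `T = Σ ⊙ ·` with `Σ_{ij} = sgn(i-j)`.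
Entry `(i, j)` of `S(AᴴA) − (SA)ᴴ(SA)` is `∑ₖ conj(a_{ki}) a_{kj} (P_{ij} − P_{ki} P_{kj})`, and
replacing `A` by `T(A)` multiplies the `k`-th term by `sgn(k-i) sgn(k-j)`. This factor is `1`
unless `k` lies between `i` and `j`, and then `|i-k| + |k-j| = |i-j|` makes the term vanish.
-/

open scoped Matrix

/-- The Poisson-like Schur multiplier semigroup `S_t` on `M_n(ℂ)`:
`S_t(A)_{ij} = e^{-t|i-j|} a_{ij}`. -/
noncomputable def poissonSchur (n : ℕ) (t : ℝ) (A : Matrix (Fin n) (Fin n) ℂ) :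
    Matrix (Fin n) (Fin n) ℂ :=
  fun i j => (Real.exp (-t * |((i : ℕ) : ℝ) - ((j : ℕ) : ℝ)|) : ℂ) * A i j

/-- The triangular transform `T : M_n(ℂ) → M_n(ℂ)`, `T(A)_{ij} = sgn(i-j) a_{ij}`. -/
def triangular (n : ℕ) (A : Matrix (Fin n) (Fin n) ℂ) : Matrix (Fin n) (Fin n) ℂ :=
  fun i j => ((Int.sign ((i : ℤ) - (j : ℤ)) : ℤ) : ℂ) * A i j

namespace Matrix

variable {ι R : Type*} [Fintype ι] [CommRing R] [StarRing R]

def schurDefect (M A : Matrix ι ι R) : Matrix ι ι R :=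
  M ⊙ (Aᴴ * A) - (M ⊙ A)ᴴ * (M ⊙ A)

theorem schurDefect_apply (M A : Matrix ι ι R) (i j : ι) :
    schurDefect M A i j = ∑ k, star (A k i) * A k j * (M i j - star (M k i) * M k j) := by
  simp only [schurDefect, sub_apply, hadamard_apply, mul_apply, conjTranspose_apply,
    Finset.mul_sum, ← Finset.sum_sub_distrib]
  refine Finset.sum_congr rfl fun k _ => ?_
  rw [star_mul']
  ring

theorem schurDefect_hadamard_of_forall (M S A : Matrix ι ι R)
    (h : ∀ i j k, star (S k i) * S k j = 1 ∨ M i j = star (M k i) * M k j) :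
    schurDefect M (S ⊙ A) = schurDefect M A := by
  ext i j
  simp only [schurDefect_apply]
  refine Finset.sum_congr rfl fun k _ => ?_
  rcases h i j k with hS | hM
  · simp only [hadamard_apply, star_mul']
    linear_combination (star (A k i) * A k j * (M i j - star (M k i) * M k j)) * hS
  · simp [hM]

end Matrix

open Matrix

theorem abs_sub_add_abs_sub_of_sign_mul_ne_one {x y z : ℤ}
    (h : (y - x).sign * (y - z).sign ≠ 1) : |x - y| + |y - z| = |x - z| := by
  have hnonneg : 0 ≤ (x - y) * (y - z) := by
    rw [← Int.sign_mul, Ne, Int.sign_eq_one_iff_pos, not_lt] at h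
    linarith [show (y - x) * (y - z) = -((x - y) * (y - z)) by ring]
  calc |x - y| + |y - z| = |x - y + (y - z)| :=
        ((abs_add_eq_add_abs_iff _ _).2 (mul_nonneg_iff.1 hnonneg)).symm
    _ = |x - z| := by rw [sub_add_sub_cancel]

theorem exp_neg_mul_abs_sub_eq_mul_of_sign_mul_ne_one (t : ℝ) {i j k : ℕ}
    (h : ((k : ℤ) - i).sign * ((k : ℤ) - j).sign ≠ 1) :
    Real.exp (-t * |(i : ℝ) - j|) = Real.exp (-t * |(k : ℝ) - i|) * Real.exp (-t * |(k : ℝ) - j|) := by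
  have hdist : |(i : ℝ) - k| + |(k : ℝ) - j| = |(i : ℝ) - j| := by
    exact_mod_cast abs_sub_add_abs_sub_of_sign_mul_ne_one h
  rw [← Real.exp_add, ← hdist, abs_sub_comm (i : ℝ)]
  ring_nf

noncomputable def poissonSchurKernel (n : ℕ) (t : ℝ) : Matrix (Fin n) (Fin n) ℂ :=
  of fun i j => (Real.exp (-t * |((i : ℕ) : ℝ) - ((j : ℕ) : ℝ)|) : ℂ)

def triangularKernel (n : ℕ) : Matrix (Fin n) (Fin n) ℂ :=
  of fun i j => ((Int.sign ((i : ℤ) - (j : ℤ)) : ℤ) : ℂ)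

theorem poissonSchur_eq_hadamard (n : ℕ) (t : ℝ) (A : Matrix (Fin n) (Fin n) ℂ) :
    poissonSchur n t A = poissonSchurKernel n t ⊙ A :=
  rfl

theorem triangular_eq_hadamard (n : ℕ) (A : Matrix (Fin n) (Fin n) ℂ) :
    triangular n A = triangularKernel n ⊙ A :=
  rfl

theorem triangularKernel_or_poissonSchurKernel_mul (n : ℕ) (t : ℝ) (i j k : Fin n) :
    star (triangularKernel n k i) * triangularKernel n k j = 1 ∨
      poissonSchurKernel n t i j = star (poissonSchurKernel n t k i) * poissonSchurKernel n t k j := by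
  by_cases h : ((k : ℤ) - i).sign * ((k : ℤ) - j).sign = 1
  · left
    simp only [triangularKernel, of_apply, star_intCast]
    exact_mod_cast h
  · right
    simp only [poissonSchurKernel, of_apply, Complex.star_def, Complex.conj_ofReal]
    exact_mod_cast exp_neg_mul_abs_sub_eq_mul_of_sign_mul_ne_one t h

theorem poissonSchur_sub_eq_triangular_general (n : ℕ)
    (A : Matrix (Fin n) (Fin n) ℂ) (t : ℝ) :
    poissonSchur n t (Aᴴ * A) - (poissonSchur n t A)ᴴ * (poissonSchur n t A) =
      poissonSchur n t ((triangular n A)ᴴ * triangular n A)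
        - (poissonSchur n t (triangular n A))ᴴ * (poissonSchur n t (triangular n A)) := by
  simp only [poissonSchur_eq_hadamard, triangular_eq_hadamard]
  exact (schurDefect_hadamard_of_forall _ _ A (triangularKernel_or_poissonSchurKernel_mul n t)).symm

/-- `S_t|A|² − |S_t A|² = S_t|T(A)|² − |S_t T(A)|²` where `|X|² = XᴴX`. -/
theorem poissonSchur_sub_eq_triangular (n : ℕ) (hn : 1 ≤ n)
    (A : Matrix (Fin n) (Fin n) ℂ) (t : ℝ) (ht : 0 ≤ t) :
    poissonSchur n t (Aᴴ * A) - (poissonSchur n t A)ᴴ * (poissonSchur n t A) =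
      poissonSchur n t ((triangular n A)ᴴ * triangular n A)
        - (poissonSchur n t (triangular n A))ᴴ * (poissonSchur n t (triangular n A)) :=
  poissonSchur_sub_eq_triangular_general n A t
end

section
/- Let n ≥ 1 and A ∈ M_n(ℂ). Then sup_{0<t<∞} ‖ S_t(T(A)ᴴT(A)) − (S_t T(A))ᴴ(S_t T(A)) ‖_∞^{1/2} = sup_{0<t<∞} ‖ S_t(AᴴA) − (S_t A)ᴴ(S_t A) ‖_∞^{1/2}; that is, the triangular transform T is isometric for the column-BMO seminorm ‖A‖_{BMO_c(S)} = sup_{0<t<∞} ‖S_t|A|² − |S_t A|²‖_∞^{1/2} associated with the semigroup S. -/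
open scoped Matrix

/-- The operator norm of a matrix acting on `ℓ₂(n)`. -/
noncomputable def opNorm {n : ℕ} (A : Matrix (Fin n) (Fin n) ℂ) : ℝ :=
  ‖Matrix.toEuclideanCLM (𝕜 := ℂ) A‖

/-!
Entrywise, `(S_t |B|² - |S_t B|²)_{ij} = ∑_k (w_{ij} - w_{ki} w_{kj}) · conj(b_{ki}) b_{kj}` with
`w_{ij} = e^{-t|i-j|}`. Replacing `B` by `T(B)` multiplies the `k`-th term by
`sgn(k-i) sgn(k-j)`, which is `1` unless `k` lies between `i` and `j`; but then
`|i-j| = |k-i| + |k-j|`, so the weight `w_{ij} - w_{ki} w_{kj}` vanishes. Hence the two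
matrices agree for every `t`, not only their norms.
-/

noncomputable def poissonWeight (t : ℝ) (i j : ℕ) : ℝ :=
  Real.exp (-t * |(i : ℝ) - j|)

lemma poissonSchur_apply (n : ℕ) (t : ℝ) (A : Matrix (Fin n) (Fin n) ℂ) (i j : Fin n) :
    poissonSchur n t A i j = poissonWeight t i j * A i j :=
  rfl

lemma abs_sub_eq_abs_sub_add_abs_sub_of_mem_uIcc {α : Type*} [AddCommGroup α] [LinearOrder α]
    [IsOrderedAddMonoid α] {a b c : α} (h : c ∈ Set.uIcc a b) :
    |a - b| = |c - a| + |c - b| := by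
  rcases Set.mem_uIcc.1 h with ⟨hac, hcb⟩ | ⟨hbc, hca⟩
  · rw [abs_of_nonpos (sub_nonpos.2 (hac.trans hcb)), abs_of_nonneg (sub_nonneg.2 hac),
      abs_of_nonpos (sub_nonpos.2 hcb)]
    abel
  · rw [abs_of_nonneg (sub_nonneg.2 (hbc.trans hca)), abs_of_nonpos (sub_nonpos.2 hca),
      abs_of_nonneg (sub_nonneg.2 hbc)]
    abel

lemma poissonWeight_mul_poissonWeight_of_mem_uIcc (t : ℝ) {i j k : ℕ}
    (h : k ∈ Set.uIcc i j) :
    poissonWeight t k i * poissonWeight t k j = poissonWeight t i j := by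
  have hk : (k : ℝ) ∈ Set.uIcc (i : ℝ) j := by
    rcases Set.mem_uIcc.1 h with ⟨h₁, h₂⟩ | ⟨h₁, h₂⟩
    · exact Set.mem_uIcc_of_le (Nat.cast_le.2 h₁) (Nat.cast_le.2 h₂)
    · exact Set.mem_uIcc_of_ge (Nat.cast_le.2 h₁) (Nat.cast_le.2 h₂)
  rw [poissonWeight, poissonWeight, poissonWeight, ← Real.exp_add,
    abs_sub_eq_abs_sub_add_abs_sub_of_mem_uIcc hk, mul_add]

lemma mem_uIcc_of_sign_mul_sign_ne_one {i j k : ℕ}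
    (h : ((k : ℤ) - i).sign * ((k : ℤ) - j).sign ≠ 1) : k ∈ Set.uIcc i j := by
  rw [← Int.sign_mul, Ne, Int.sign_eq_one_iff_pos, not_lt] at h
  rcases le_total i j with hij | hji
  · rw [Set.uIcc_of_le hij, Set.mem_Icc]
    constructor <;> by_contra! <;> nlinarith
  · rw [Set.uIcc_of_ge hji, Set.mem_Icc]
    constructor <;> by_contra! <;> nlinarith

noncomputable def bmoDefect (n : ℕ) (t : ℝ) (B : Matrix (Fin n) (Fin n) ℂ) :
    Matrix (Fin n) (Fin n) ℂ :=
  poissonSchur n t (Bᴴ * B) - (poissonSchur n t B)ᴴ * poissonSchur n t B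

lemma bmoDefect_apply (n : ℕ) (t : ℝ) (B : Matrix (Fin n) (Fin n) ℂ) (i j : Fin n) :
    bmoDefect n t B i j = ∑ k : Fin n,
      ((poissonWeight t i j - poissonWeight t k i * poissonWeight t k j : ℝ) : ℂ)
        * (star (B k i) * B k j) := by
  simp only [bmoDefect, Matrix.sub_apply, poissonSchur_apply, Matrix.mul_apply,
    Matrix.conjTranspose_apply, Finset.mul_sum, ← Finset.sum_sub_distrib]
  refine Finset.sum_congr rfl fun k _ => ?_
  simp only [star_mul', Complex.star_def, Complex.conj_ofReal]
  push_cast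
  ring

lemma star_triangular_mul_triangular (n : ℕ) (A : Matrix (Fin n) (Fin n) ℂ) (i j k : Fin n) :
    star (triangular n A k i) * triangular n A k j
      = (((k : ℤ) - i).sign * ((k : ℤ) - j).sign : ℤ) * (star (A k i) * A k j) := by
  simp only [triangular, star_mul', star_intCast]
  push_cast
  ring

lemma bmoDefect_triangular (n : ℕ) (t : ℝ) (A : Matrix (Fin n) (Fin n) ℂ) :
    bmoDefect n t (triangular n A) = bmoDefect n t A := by
  ext i j
  rw [bmoDefect_apply, bmoDefect_apply]
  refine Finset.sum_congr rfl fun k _ => ?_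
  rw [star_triangular_mul_triangular]
  by_cases hs : ((k : ℤ) - (i : ℕ)).sign * ((k : ℤ) - (j : ℕ)).sign = 1
  · rw [hs, Int.cast_one, one_mul]
  · rw [poissonWeight_mul_poissonWeight_of_mem_uIcc t (mem_uIcc_of_sign_mul_sign_ne_one hs),
      sub_self, Complex.ofReal_zero, zero_mul, zero_mul]

theorem triangular_isometric_BMO_general (n : ℕ) (A : Matrix (Fin n) (Fin n) ℂ) :
    (⨆ t : Set.Ioi (0 : ℝ), Real.sqrt (opNorm
        (poissonSchur n t ((triangular n A)ᴴ * triangular n A)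
          - (poissonSchur n t (triangular n A))ᴴ * (poissonSchur n t (triangular n A))))) =
      ⨆ t : Set.Ioi (0 : ℝ), Real.sqrt (opNorm
        (poissonSchur n t (Aᴴ * A) - (poissonSchur n t A)ᴴ * (poissonSchur n t A))) :=
  iSup_congr fun t => congrArg (fun M => Real.sqrt (opNorm M)) (bmoDefect_triangular n t A)

/-- The triangular transform is isometric for the column-BMO seminorm
`‖A‖_{BMO_c(S)} = sup_{0<t<∞} ‖S_t|A|² − |S_t A|²‖_∞^{1/2}`. -/
theorem triangular_isometric_BMO (n : ℕ) (hn : 1 ≤ n) (A : Matrix (Fin n) (Fin n) ℂ) :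
    (⨆ t : Set.Ioi (0 : ℝ), Real.sqrt (opNorm
        (poissonSchur n t ((triangular n A)ᴴ * triangular n A)
          - (poissonSchur n t (triangular n A))ᴴ * (poissonSchur n t (triangular n A))))) =
      ⨆ t : Set.Ioi (0 : ℝ), Real.sqrt (opNorm
        (poissonSchur n t (Aᴴ * A) - (poissonSchur n t A)ᴴ * (poissonSchur n t A))) :=
  triangular_isometric_BMO_general n A
end

section
/- Let H be a real inner product space, n ≥ 1, b : {1,…,n} → H any map, and t ≥ 0. Then the n×n matrix with entries M_{ij} = exp( −t ‖b(i) − b(j)‖²_H ) is positive semidefinite. -/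
open scoped ComplexOrder

/-!
Expanding the square, `exp (-t‖bᵢ - bⱼ‖²) = dᵢ dⱼ exp (2t⟪bᵢ, bⱼ⟫)` with `dᵢ = exp (-t‖bᵢ‖²)`.
The matrix `2t⟪bᵢ, bⱼ⟫` is a scaled Gram matrix, hence positive semidefinite; by the Schur
product theorem so are its Hadamard powers, and summing the exponential series entrywise so is
its entrywise exponential. The rank-one factor `dᵢ dⱼ` costs one more Hadamard product.
-/

namespace Matrix

variable {ι : Type*} [Fintype ι]

theorem PosSemidef.map_pow {𝕜 : Type*} [RCLike 𝕜] {A : Matrix ι ι 𝕜} (hA : A.PosSemidef)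
    (k : ℕ) : (A.map (· ^ k)).PosSemidef := by
  induction k with
  | zero =>
    have : A.map (· ^ 0) = vecMulVec 1 (star 1) := by ext; simp [vecMulVec]
    exact this ▸ posSemidef_vecMulVec_self_star 1
  | succ k ih =>
    have : A.map (· ^ (k + 1)) = A.map (· ^ k) ⊙ A := by ext; simp [pow_succ]
    exact this ▸ ih.hadamard hA

theorem PosSemidef.map_exp {A : Matrix ι ι ℝ} (hA : A.PosSemidef) :
    (A.map Real.exp).PosSemidef := by
  refine .of_dotProduct_mulVec_nonneg (hA.isHermitian.map _ fun _ => rfl) fun x => ?_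
  have hsum : HasSum (fun k : ℕ => (k.factorial : ℝ)⁻¹ * (star x ⬝ᵥ A.map (· ^ k) *ᵥ x))
      (star x ⬝ᵥ A.map Real.exp *ᵥ x) := by
    simp only [dotProduct, mulVec, Finset.mul_sum, map_apply]
    refine hasSum_sum fun i _ => hasSum_sum fun j _ => ?_
    have h := (NormedSpace.expSeries_div_hasSum_exp (A i j)).mul_left (star x i * x j)
    rw [← Real.exp_eq_exp_ℝ] at h
    simpa only [div_eq_inv_mul, mul_comm, mul_left_comm, mul_assoc] using h
  exact hsum.nonneg fun k => mul_nonneg (by positivity) ((hA.map_pow k).dotProduct_mulVec_nonneg x)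

open scoped MatrixOrder in
theorem PosSemidef.map_ofReal {𝕜 : Type*} [RCLike 𝕜] {A : Matrix ι ι ℝ} (hA : A.PosSemidef) :
    (A.map ((↑) : ℝ → 𝕜)).PosSemidef := by
  classical
  obtain ⟨B, rfl⟩ := CStarAlgebra.nonneg_iff_eq_star_mul_self.mp hA.nonneg
  have : (star B * B).map ((↑) : ℝ → 𝕜) = (B.map (↑))ᴴ * B.map (↑) := by
    rw [← conjTranspose_map _ fun _ => (RCLike.conj_ofReal _).symm]
    exact Matrix.map_mul (f := RCLike.ofRealAm.toRingHom)
  exact this ▸ posSemidef_conjTranspose_mul_self _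

theorem posSemidef_exp_neg_mul_norm_sub_sq {H : Type*} [NormedAddCommGroup H]
    [InnerProductSpace ℝ H] (b : ι → H) {t : ℝ} (ht : 0 ≤ t) :
    (of fun i j => Real.exp (-t * ‖b i - b j‖ ^ 2)).PosSemidef := by
  set d : ι → ℝ := fun i => Real.exp (-t * ‖b i‖ ^ 2)
  have hG : ((2 * t) • gram ℝ b).PosSemidef := (posSemidef_gram ℝ b).smul (by positivity)
  have : of (fun i j => Real.exp (-t * ‖b i - b j‖ ^ 2)) =
      ((2 * t) • gram ℝ b).map Real.exp ⊙ vecMulVec d (star d) := by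
    ext i j
    simp only [of_apply, hadamard_apply, map_apply, smul_apply, gram_apply, vecMulVec_apply,
      d, star_trivial, smul_eq_mul, ← Real.exp_add, norm_sub_sq_real]
    congr 1
    ring
  exact this ▸ hG.map_exp.hadamard (posSemidef_vecMulVec_self_star d)

end Matrix

theorem posSemidef_exp_neg_dist_sq_general (H : Type*) [NormedAddCommGroup H]
    [InnerProductSpace ℝ H] (n : ℕ) (b : Fin n → H) (t : ℝ) (ht : 0 ≤ t) :
    (Matrix.of fun i j : Fin n =>
      ((Real.exp (-t * ‖b i - b j‖ ^ 2) : ℝ) : ℂ)).PosSemidef :=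
  (Matrix.posSemidef_exp_neg_mul_norm_sub_sq b ht).map_ofReal

/-- Schoenberg-type fact: for any map `b : {1,…,n} → H` into a real inner product
space and `t ≥ 0`, the matrix `(exp(-t‖b(i)-b(j)‖²))_{ij}` is positive semidefinite. -/
theorem posSemidef_exp_neg_dist_sq (H : Type*) [NormedAddCommGroup H]
    [InnerProductSpace ℝ H] (n : ℕ) (hn : 1 ≤ n) (b : Fin n → H) (t : ℝ) (ht : 0 ≤ t) :
    (Matrix.of fun i j : Fin n =>
      ((Real.exp (-t * ‖b i - b j‖ ^ 2) : ℝ) : ℂ)).PosSemidef :=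
  posSemidef_exp_neg_dist_sq_general H n b t ht
end

section
/- Let F_S be the free group on a set S and let |g| denote the word length of g ∈ F_S (the length of its reduced word). Then the word length is a conditionally negative length function: |e| = 0, |g⁻¹| = |g|, and for every finite subset F ⊆ F_S and every β : F_S → ℂ with ∑_{g∈F} β_g = 0, the sum ∑_{g,h∈F} conj(β_g) β_h |g⁻¹h| is a nonpositive real number. -/
/-!
Write the reduced words of `g` and `h` as `w ++ a` and `w ++ b` with `w` maximal. Then `a` and `b`
start with different letters, so `a⁻¹ b` is the reduced word of `g⁻¹ h`, and
`|g⁻¹ h| = (|g| + 1) + (|h| + 1) - 2 N(g, h)`, where `N(g, h) = |w| + 1` is the number of prefixes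
(the empty one included) shared by the reduced words of `g` and `h`. When `∑ β = 0` the first two
terms contribute nothing, while `N` is the Gram kernel of the indicator vectors of the prefix sets,
so the sum equals `-2 ∑_w |∑_{g ∋ w} β_g|²`.
-/

open scoped ComplexConjugate

open Finset

namespace List

variable {α : Type*}

theorem nodup_inits : ∀ l : List α, l.inits.Nodup
  | [] => nodup_singleton _
  | a :: l => by
    rw [inits_cons]
    exact ((nodup_inits l).map cons_injective).cons (by simp)

theorem prefix_append_and_prefix_append_iff {a b : List α}
    (hab : ∀ x ∈ a.head?, ∀ y ∈ b.head?, x ≠ y) :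
    ∀ {w u : List α}, u <+: w ++ a ∧ u <+: w ++ b ↔ u <+: w
  | [], [] => by simp
  | [], x :: u => by
    refine iff_of_false ?_ (by simp)
    rintro ⟨⟨a', rfl⟩, ⟨b', hb⟩⟩
    rw [nil_append] at hb
    exact hab x (by simp) x (by simp [← hb]) rfl
  | _ :: _, [] => by simp
  | c :: w, x :: u => by
    simp only [cons_append, cons_prefix_cons]
    rw [← prefix_append_and_prefix_append_iff hab (w := w)]
    tauto

theorem exists_maximal_common_prefix :
    ∀ l₁ l₂ : List α, ∃ w a b, l₁ = w ++ a ∧ l₂ = w ++ b ∧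
      ∀ x ∈ a.head?, ∀ y ∈ b.head?, x ≠ y
  | [], l₂ => ⟨[], [], l₂, rfl, rfl, by simp⟩
  | x :: l₁, [] => ⟨[], x :: l₁, [], rfl, rfl, by simp⟩
  | x :: l₁, y :: l₂ => by
    by_cases hxy : x = y
    · obtain ⟨w, a, b, rfl, rfl, hab⟩ := exists_maximal_common_prefix l₁ l₂
      exact ⟨x :: w, a, b, rfl, by rw [hxy]; rfl, hab⟩
    · exact ⟨[], x :: l₁, y :: l₂, rfl, rfl, by simpa using hxy⟩

end List

namespace FreeGroup

variable {α : Type*}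

theorem IsReduced.invRev {L : List (α × Bool)} (h : IsReduced L) : IsReduced (invRev L) := by
  rw [IsReduced, FreeGroup.invRev, List.isChain_reverse, List.isChain_map]
  exact h.imp fun x y hxy hyx => by simpa using (hxy hyx.symm).symm

theorem isReduced_invRev_append {a b : List (α × Bool)} (ha : IsReduced a) (hb : IsReduced b)
    (hab : ∀ x ∈ a.head?, ∀ y ∈ b.head?, x ≠ y) : IsReduced (invRev a ++ b) := by
  refine List.isChain_append.2 ⟨ha.invRev, hb, ?_⟩
  rcases a with _ | ⟨x, a⟩
  · simp
  · intro x' hx' y hy hxy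
    obtain rfl : (x.1, !x.2) = x' := by simpa [FreeGroup.invRev] using hx'
    have hne : x ≠ y := hab x rfl y hy
    obtain ⟨x₁, x₂⟩ := x
    obtain ⟨y₁, y₂⟩ := y
    obtain rfl : x₁ = y₁ := hxy
    cases x₂ <;> cases y₂ <;> simp_all

variable [DecidableEq α]

def prefixes (g : FreeGroup α) : Finset (List (α × Bool)) := g.toWord.inits.toFinset

theorem norm_inv_mul_add_two_mul_card_prefixes_inter (g h : FreeGroup α) :
    (g⁻¹ * h).norm + 2 * #(g.prefixes ∩ h.prefixes) = g.norm + h.norm + 2 := by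
  obtain ⟨w, a, b, hg, hh, hab⟩ := List.exists_maximal_common_prefix g.toWord h.toWord
  have ha : IsReduced a := (hg ▸ isReduced_toWord).infix (List.suffix_append w a).isInfix
  have hb : IsReduced b := (hh ▸ isReduced_toWord).infix (List.suffix_append w b).isInfix
  have hgh : g⁻¹ * h = mk (invRev a ++ b) := by
    rw [← mk_toWord (x := g), ← mk_toWord (x := h), hg, hh]
    simp only [← mul_mk, ← inv_mk]
    group
  have hcard : #(g.prefixes ∩ h.prefixes) = w.length + 1 := by
    have : g.prefixes ∩ h.prefixes = w.inits.toFinset := by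
      ext u
      simp only [prefixes, hg, hh, Finset.mem_inter, List.mem_toFinset, List.mem_inits]
      exact List.prefix_append_and_prefix_append_iff hab
    rw [this, List.toFinset_card_of_nodup (List.nodup_inits w), List.length_inits]
  have hnorm : (g⁻¹ * h).norm = a.length + b.length := by
    rw [hgh, norm, toWord_mk, (isReduced_invRev_append ha hb hab).reduce_eq, List.length_append,
      invRev_length]
  rw [hnorm, hcard, norm, norm, hg, hh, List.length_append, List.length_append]
  ring

end FreeGroup

namespace Finset

variable {ι : Type*}

theorem sum_sum_conj_mul_mul_card_inter {κ : Type*} [DecidableEq κ] (s : Finset ι)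
    (P : ι → Finset κ) (β : ι → ℂ) :
    ∑ i ∈ s, ∑ j ∈ s, conj (β i) * β j * (#(P i ∩ P j) : ℂ) =
      ∑ x ∈ s.biUnion P, (Complex.normSq (∑ i ∈ s with x ∈ P i, β i) : ℂ) := by
  calc ∑ i ∈ s, ∑ j ∈ s, conj (β i) * β j * (#(P i ∩ P j) : ℂ)
      = ∑ i ∈ s, ∑ x ∈ P i, conj (β i) * ∑ j ∈ s with x ∈ P j, β j := by
        refine sum_congr rfl fun i _ => ?_
        simp_rw [← filter_mem_eq_inter, ← sum_boole, mul_sum, sum_filter]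
        rw [sum_comm]
        simp_rw [mul_ite, mul_one, mul_zero]
    _ = ∑ x ∈ s.biUnion P, ∑ i ∈ s with x ∈ P i, conj (β i) * ∑ j ∈ s with x ∈ P j, β j :=
        sum_comm' fun i x => by simp only [mem_biUnion, mem_filter]; tauto
    _ = _ := by
        refine sum_congr rfl fun x _ => ?_
        rw [← sum_mul, ← map_sum, Complex.normSq_eq_conj_mul_self]

theorem sum_sum_conj_mul_mul_add_eq_zero (s : Finset ι) (β : ι → ℂ) (hβ : ∑ i ∈ s, β i = 0)
    (f : ι → ℂ) : ∑ i ∈ s, ∑ j ∈ s, conj (β i) * β j * (f i + f j) = 0 := by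
  have hβ' : ∑ i ∈ s, conj (β i) = 0 := by rw [← map_sum, hβ, map_zero]
  simp_rw [mul_add, sum_add_distrib]
  calc (∑ i ∈ s, ∑ j ∈ s, conj (β i) * β j * f i) + ∑ i ∈ s, ∑ j ∈ s, conj (β i) * β j * f j
      = (∑ i ∈ s, conj (β i) * f i) * (∑ j ∈ s, β j) +
          (∑ i ∈ s, conj (β i)) * ∑ j ∈ s, β j * f j := by
        simp_rw [sum_mul_sum]
        congr 1 <;> exact sum_congr rfl fun i _ => sum_congr rfl fun j _ => by ring
    _ = 0 := by rw [hβ, hβ', mul_zero, zero_mul, add_zero]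

end Finset

open FreeGroup in
/-- The word length on a free group is a conditionally negative length function:
`|e| = 0`, `|g⁻¹| = |g|`, and `∑ β_g = 0` implies
`∑_{g,h} conj(β_g) β_h |g⁻¹h|` is a nonpositive real number. -/
theorem freeGroup_wordLength_cond_negative (S : Type*) [DecidableEq S] :
    ((1 : FreeGroup S).norm = 0) ∧ (∀ g : FreeGroup S, g⁻¹.norm = g.norm) ∧
      ∀ (F : Finset (FreeGroup S)) (β : FreeGroup S → ℂ), ∑ g ∈ F, β g = 0 →
        ∃ r : ℝ, r ≤ 0 ∧
          (∑ g ∈ F, ∑ h ∈ F, conj (β g) * β h * (((g⁻¹ * h).norm : ℕ) : ℂ)) = (r : ℂ) := by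
  refine ⟨norm_one, fun g => norm_inv_eq, fun F β hβ => ?_⟩
  have hnorm : ∀ g h : FreeGroup S, (((g⁻¹ * h).norm : ℕ) : ℂ) =
      ((g.norm + 1 : ℕ) + (h.norm + 1 : ℕ) : ℂ) - 2 * #(g.prefixes ∩ h.prefixes) := fun g h => by
    rw [eq_sub_iff_add_eq]
    exact_mod_cast (norm_inv_mul_add_two_mul_card_prefixes_inter g h).trans (by ring)
  set r := ∑ w ∈ F.biUnion prefixes, Complex.normSq (∑ g ∈ F with w ∈ g.prefixes, β g) with hr
  have hr_nonneg : 0 ≤ r := sum_nonneg fun _ _ => Complex.normSq_nonneg _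
  refine ⟨-2 * r, by linarith, ?_⟩
  simp_rw [hnorm, mul_sub, sum_sub_distrib, sum_sum_conj_mul_mul_add_eq_zero F β hβ,
    mul_left_comm _ (2 : ℂ), ← mul_sum, sum_sum_conj_mul_mul_card_inter]
  rw [hr]
  push_cast
  ring
end

section
/- Let n ≥ 1, t > 0, and let f : ℝⁿ → ℂ be integrable. Then for every x ∈ ℝⁿ, (4πt)^{−n/2} ∫_{ℝⁿ} exp(−|x−y|²/(4t)) f(y) dy = Γ(n/2 + 1)^{−1} ∫₀^∞ e^{−u} u^{n/2} ( 1/vol(B(x, √(4ut))) ∫_{B(x,√(4ut))} f(y) dy ) du; that is, the heat semigroup on ℝⁿ is an average of mean value operators over Euclidean balls. -/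
/-!
Since `exp (-a) = ∫_{u > a} exp (-u) du` for `a ≥ 0`, Fubini gives, for any measurable `a ≥ 0`,
`∫ exp (-a y) f y dy = ∫₀^∞ exp (-u) (∫_{a < u} f) du`. For `a y = |x - y|² / (4t)` the sublevel
set `{a < u}` is the ball `B(x, √(4ut))`, of volume `(4πut)^{n/2} / Γ(n/2 + 1)`; dividing by this
volume turns the integral over the ball into the mean of `f`, and the weight
`u^{n/2} / Γ(n/2 + 1)` divided by this volume is `(4πt)^{-n/2}`, the heat kernel's normalisation.
-/

open MeasureTheory Real Set

section LayerCake

variable {E : Type*} [NormedAddCommGroup E] [NormedSpace ℝ E] [CompleteSpace E]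

theorem integral_Ioi_indicator_exp_neg_smul {c : ℝ} (hc : 0 ≤ c) (v : E) :
    ∫ u in Ioi 0, (Ioi c).indicator (fun u => exp (-u) • v) u = exp (-c) • v := by
  rw [integral_indicator measurableSet_Ioi, Measure.restrict_restrict measurableSet_Ioi,
    Ioi_inter_Ioi, max_eq_left hc, integral_smul_const, integral_exp_neg_Ioi]

theorem integral_exp_neg_smul_eq_integral_Ioi_setIntegral_sublevel {α : Type*}
    [MeasurableSpace α] {μ : Measure α} [SFinite μ]
    {a : α → ℝ} (ha : Measurable a) (ha_nonneg : ∀ y, 0 ≤ a y) {f : α → E}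
    (hf : Integrable f μ) :
    ∫ y, exp (-a y) • f y ∂μ = ∫ u in Ioi 0, exp (-u) • ∫ y in {y | a y < u}, f y ∂μ := by
  set S := {p : ℝ × α | a p.2 < p.1}
  set g : ℝ × α → E := S.indicator fun p => exp (-p.1) • f p.2
  have hS : MeasurableSet S := measurableSet_lt (ha.comp measurable_snd) measurable_fst
  have hg : Integrable g ((volume.restrict (Ioi 0)).prod μ) := by
    have hexp : IntegrableOn (fun u : ℝ => exp (-u)) (Ioi 0) := by
      simpa using exp_neg_integrableOn_Ioi 0 one_pos
    refine ((hexp.mul_prod hf.norm).mono' ?_ ?_).indicator hS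
    · exact measurable_fst.neg.exp.aestronglyMeasurable.smul hf.1.comp_snd
    · exact .of_forall fun p => by simp [norm_smul]
  calc ∫ y, exp (-a y) • f y ∂μ = ∫ y, (∫ u in Ioi 0, g (u, y)) ∂μ :=
        integral_congr_ae <| .of_forall fun y =>
          (integral_Ioi_indicator_exp_neg_smul (ha_nonneg y) (f y)).symm
    _ = ∫ u in Ioi 0, ∫ y, g (u, y) ∂μ :=
        (integral_integral_swap (f := fun u y => g (u, y)) hg).symm
    _ = ∫ u in Ioi 0, exp (-u) • ∫ y in {y | a y < u}, f y ∂μ := by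
        refine integral_congr_ae (.of_forall fun u => ?_)
        dsimp only
        rw [← integral_smul, ← integral_indicator (measurableSet_lt ha measurable_const)]
        rfl

end LayerCake

theorem EuclideanSpace.volume_ball_sqrt_toReal {ι : Type*} [Fintype ι]
    (x : EuclideanSpace ℝ ι) {s : ℝ} (hs : 0 < s) :
    (volume (Metric.ball x √s)).toReal =
      (s * π) ^ (Fintype.card ι / 2 : ℝ) / Gamma (Fintype.card ι / 2 + 1) := by
  cases isEmpty_or_nonempty ι with
  | inl hι =>
    have hball : Metric.ball x √s = univ :=
      eq_univ_of_forall fun y => by simp [Subsingleton.elim y x, hs]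
    rw [hball, ← (PiLp.volume_preserving_toLp ι).measure_preimage
      MeasurableSet.univ.nullMeasurableSet, preimage_univ, volume_pi, Measure.pi_univ]
    simp
  | inr hι =>
    rw [EuclideanSpace.volume_ball, ENNReal.toReal_mul, ENNReal.toReal_pow,
      ENNReal.toReal_ofReal (sqrt_nonneg _), ENNReal.toReal_ofReal (by positivity), mul_div_assoc',
      ← mul_pow, ← sqrt_mul hs.le, sqrt_eq_rpow, ← rpow_natCast, ← rpow_mul (by positivity)]
    ring_nf

theorem setOf_norm_sub_sq_div_lt_eq_ball {F : Type*} [SeminormedAddCommGroup F] (x : F)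
    {c : ℝ} (hc : 0 < c) (u : ℝ) :
    {y | ‖x - y‖ ^ 2 / c < u} = Metric.ball x √(c * u) := by
  ext y
  rw [mem_ofPred_eq, Metric.mem_ball, dist_comm, dist_eq_norm, lt_sqrt (norm_nonneg _),
    div_lt_iff₀' hc]

theorem heat_semigroup_eq_average_of_ball_means_general (n : ℕ) (t : ℝ) (ht : 0 < t)
    (f : EuclideanSpace ℝ (Fin n) → ℂ) (hf : Integrable f) (x : EuclideanSpace ℝ (Fin n)) :
    ((4 * π * t) ^ (-(n : ℝ) / 2)) •
        ∫ y, Real.exp (-‖x - y‖ ^ 2 / (4 * t)) • f y =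
      (Real.Gamma ((n : ℝ) / 2 + 1))⁻¹ •
        ∫ u in Set.Ioi (0 : ℝ),
          (Real.exp (-u) * u ^ ((n : ℝ) / 2)) •
            (((volume (Metric.ball x (Real.sqrt (4 * u * t)))).toReal)⁻¹ •
              ∫ y in Metric.ball x (Real.sqrt (4 * u * t)), f y) := by
  have hΓ : Gamma (n / 2 + 1) ≠ 0 := (Gamma_pos_of_pos (by positivity)).ne'
  have hmean (u : ℝ) (hu : 0 < u) :
      (exp (-u) * u ^ (n / 2 : ℝ)) • ((volume (Metric.ball x √(4 * u * t))).toReal⁻¹ •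
          ∫ y in Metric.ball x √(4 * u * t), f y) =
        (Gamma (n / 2 + 1) * (4 * π * t) ^ (-(n : ℝ) / 2)) •
          (exp (-u) • ∫ y in Metric.ball x √(4 * u * t), f y) := by
    rw [EuclideanSpace.volume_ball_sqrt_toReal x (by positivity), Fintype.card_fin, smul_smul,
      smul_smul, mul_comm 4 u, mul_assoc u, mul_assoc u, mul_rpow hu.le (by positivity), neg_div,
      rpow_neg (by positivity), mul_comm (4 * t) π, ← mul_assoc]
    congr 1
    field_simp
  have hlayer := integral_exp_neg_smul_eq_integral_Ioi_setIntegral_sublevel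
    (a := fun y => ‖x - y‖ ^ 2 / (4 * t)) (by fun_prop) (fun y => by positivity) hf
  simp only [setOf_norm_sub_sq_div_lt_eq_ball x (by positivity : 0 < 4 * t), ← neg_div,
    mul_right_comm 4 t] at hlayer
  rw [setIntegral_congr_fun measurableSet_Ioi hmean, integral_smul, smul_smul, ← mul_assoc,
    inv_mul_cancel₀ hΓ, one_mul, hlayer]

/-- The heat semigroup on `ℝⁿ` is an average of mean value operators over Euclidean
balls:
`(4πt)^{-n/2} ∫ e^{-|x-y|²/(4t)} f(y) dy
  = Γ(n/2+1)⁻¹ ∫₀^∞ e^{-u} u^{n/2} (mean of f over B(x, √(4ut))) du`. -/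
theorem heat_semigroup_eq_average_of_ball_means (n : ℕ) (hn : 1 ≤ n) (t : ℝ) (ht : 0 < t)
    (f : EuclideanSpace ℝ (Fin n) → ℂ) (hf : Integrable f) (x : EuclideanSpace ℝ (Fin n)) :
    ((4 * π * t) ^ (-(n : ℝ) / 2)) •
        ∫ y, Real.exp (-‖x - y‖ ^ 2 / (4 * t)) • f y =
      (Real.Gamma ((n : ℝ) / 2 + 1))⁻¹ •
        ∫ u in Set.Ioi (0 : ℝ),
          (Real.exp (-u) * u ^ ((n : ℝ) / 2)) •
            (((volume (Metric.ball x (Real.sqrt (4 * u * t)))).toReal)⁻¹ •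
              ∫ y in Metric.ball x (Real.sqrt (4 * u * t)), f y) :=
  heat_semigroup_eq_average_of_ball_means_general n t ht f hf x
end

section
/- For every n ≥ 1, the matrix A_n ∈ M_n(ℂ) with entries (A_n)_{ii} = 0 and (A_n)_{ij} = 1/(i−j) for i ≠ j satisfies ‖A_n‖_∞ ≤ π, where ‖·‖_∞ is the operator norm on ℓ₂(n). -/
/-- The Hilbert matrix `A_n` with zero diagonal and entries `1/(i-j)` off the diagonal. -/
noncomputable def hilbertMatrix (n : ℕ) : Matrix (Fin n) (Fin n) ℂ :=
  fun i j => if i = j then 0 else (((i : ℤ) - (j : ℤ) : ℤ) : ℂ)⁻¹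

/-!
`A_n` is the `n`-th Toeplitz matrix `(ĝ (i - j))` of the sawtooth `g(s) = iπ(1 - 2s)` on the
unit circle, whose Fourier coefficients are `ĝ m = 1 / m` (and `ĝ 0 = 0`). If `F` and `G` are the
trigonometric polynomials with coefficient vectors `x` and `y`, then
`⟪y, A_n x⟫ = ∫ conj G · g · F`, so `|⟪y, A_n x⟫| ≤ ‖g‖_∞ ∫ |F| |G| ≤ π (‖x‖² + ‖y‖²) / 2`
by AM-GM and Parseval; on unit vectors this is `π`.
-/

open Complex MeasureTheory AddCircle Real
open scoped Matrix ComplexConjugate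

noncomputable section

namespace AddCircle

variable {T : ℝ} {n : ℕ}

def trigPoly (x : Fin n → ℂ) (t : AddCircle T) : ℂ := ∑ j, x j * fourier j t

lemma continuous_trigPoly (x : Fin n → ℂ) : Continuous (trigPoly (T := T) x) := by
  unfold trigPoly; fun_prop

variable [Fact (0 < T)]

def toeplitzMatrix (g : AddCircle T → ℂ) (n : ℕ) : Matrix (Fin n) (Fin n) ℂ :=
  Matrix.of fun i j => fourierCoeff g ((i : ℤ) - j)

lemma star_dotProduct_toeplitzMatrix_mulVec {g : AddCircle T → ℂ}
    (hg : Integrable g haarAddCircle) (x y : Fin n → ℂ) :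
    star y ⬝ᵥ (toeplitzMatrix g n *ᵥ x) =
      ∫ t, conj (trigPoly y t) * g t * trigPoly x t ∂haarAddCircle := by
  have hintegrable (m : ℤ) : Integrable (fun t => fourier m t • g t) haarAddCircle :=
    hg.bdd_mul (c := 1) (map_continuous _).aestronglyMeasurable
      (ae_of_all _ fun _ => (Circle.norm_coe _).le)
  have hexpand (t : AddCircle T) : conj (trigPoly y t) * g t * trigPoly x t =
      ∑ i, ∑ j, star (y i) * x j * (fourier (-((i : ℤ) - j)) t • g t) := by
    simp only [trigPoly, map_sum, Finset.sum_mul, Finset.mul_sum]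
    rw [Finset.sum_comm]
    refine Finset.sum_congr rfl fun i _ => Finset.sum_congr rfl fun j _ => ?_
    rw [neg_sub, sub_eq_add_neg, fourier_add, fourier_neg, map_mul, RCLike.star_def, smul_eq_mul]
    ring
  simp only [hexpand]
  rw [integral_finsetSum _ fun i _ =>
    integrable_finsetSum _ fun j _ => (hintegrable _).const_mul _]
  simp only [dotProduct, Matrix.mulVec, toeplitzMatrix, Matrix.of_apply, Pi.star_apply,
    Finset.mul_sum]
  refine Finset.sum_congr rfl fun i _ => ?_
  rw [integral_finsetSum _ fun j _ => (hintegrable _).const_mul _]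
  refine Finset.sum_congr rfl fun j _ => ?_
  rw [integral_const_mul, fourierCoeff]
  ring

lemma toeplitzMatrix_one : toeplitzMatrix (T := T) 1 n = 1 := by
  have hone : (1 : AddCircle T → ℂ) = fourier 0 := funext fun _ => fourier_zero.symm
  ext i j
  simp only [toeplitzMatrix, hone, fourierCoeff_fourier, Matrix.of_apply, Matrix.one_apply,
    Pi.single_apply, sub_eq_zero, Int.natCast_inj, Fin.val_inj]

lemma integral_norm_sq_trigPoly (x : Fin n → ℂ) :
    ∫ t, ‖trigPoly (T := T) x t‖ ^ 2 ∂haarAddCircle = ∑ j, ‖x j‖ ^ 2 := by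
  apply Complex.ofReal_injective
  calc ((∫ t, ‖trigPoly x t‖ ^ 2 ∂haarAddCircle : ℝ) : ℂ)
      = ∫ t : AddCircle T, conj (trigPoly x t) * 1 * trigPoly x t ∂haarAddCircle := by
        rw [← integral_complex_ofReal]
        simp only [mul_one, Complex.conj_mul', Complex.ofReal_pow]
    _ = star x ⬝ᵥ (1 *ᵥ x) := by
        rw [← toeplitzMatrix_one (T := T),
          star_dotProduct_toeplitzMatrix_mulVec (g := 1) (integrable_const (1 : ℂ))]
        rfl
    _ = _ := by
        simp only [Matrix.one_mulVec, dotProduct, Pi.star_apply, RCLike.star_def, mul_comm (conj _),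
          Complex.mul_conj', Complex.ofReal_sum, Complex.ofReal_pow]

lemma norm_star_dotProduct_toeplitzMatrix_mulVec_le {g : AddCircle T → ℂ} {C : ℝ}
    (hg : Integrable g haarAddCircle) (hgC : ∀ t, ‖g t‖ ≤ C) (x y : Fin n → ℂ) :
    ‖star y ⬝ᵥ (toeplitzMatrix g n *ᵥ x)‖ ≤ C / 2 * (∑ j, ‖x j‖ ^ 2 + ∑ i, ‖y i‖ ^ 2) := by
  have hsq (z : Fin n → ℂ) : Integrable (fun t => ‖trigPoly (T := T) z t‖ ^ 2) haarAddCircle :=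
    ((continuous_trigPoly z).norm.pow 2).integrable_of_hasCompactSupport
      (HasCompactSupport.of_compactSpace _)
  rw [star_dotProduct_toeplitzMatrix_mulVec hg, ← integral_norm_sq_trigPoly (T := T),
    ← integral_norm_sq_trigPoly (T := T), ← integral_add (hsq x) (hsq y), ← integral_const_mul]
  refine norm_integral_le_of_norm_le (((hsq x).add (hsq y)).const_mul _) (ae_of_all _ fun t => ?_)
  have hC : 0 ≤ C := (norm_nonneg _).trans (hgC t)
  rw [norm_mul, norm_mul, Complex.norm_conj]
  nlinarith [two_mul_le_add_sq ‖trigPoly x t‖ ‖trigPoly y t‖, hgC t,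
    mul_nonneg (norm_nonneg (trigPoly x t)) (norm_nonneg (trigPoly y t))]

lemma opNorm_toeplitzMatrix_le {g : AddCircle T → ℂ} {C : ℝ}
    (hg : Integrable g haarAddCircle) (hgC : ∀ t, ‖g t‖ ≤ C) :
    opNorm (toeplitzMatrix g n) ≤ C := by
  refine ContinuousLinearMap.opNorm_le_of_re_inner_le ((norm_nonneg _).trans (hgC 0))
    fun x y hx hy => (RCLike.re_le_norm _).trans ?_
  have hunit {z : EuclideanSpace ℂ (Fin n)} (hz : ‖z‖ = 1) : ∑ i, ‖z i‖ ^ 2 = 1 := by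
    rw [← EuclideanSpace.norm_sq_eq, hz, one_pow]
  rw [norm_inner_symm, EuclideanSpace.inner_eq_star_dotProduct, Matrix.ofLp_toEuclideanCLM,
    dotProduct_comm]
  have := norm_star_dotProduct_toeplitzMatrix_mulVec_le hg hgC x.ofLp y.ofLp
  rw [hunit hx, hunit hy] at this
  linarith

end AddCircle

/-- The sawtooth `iπ(1 - 2s)` on `(0, 1]`, written as `-2πi B₁(s)` so that the Fourier
coefficients of the Bernoulli function `B₁` can be used. -/
def hilbertSymbol : UnitAddCircle → ℂ :=
  liftIoc 1 0 fun s => -(2 * π * I) * bernoulliFun 1 s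

/-- At `m = 0` both sides vanish, the right one because `(0 : ℂ)⁻¹ = 0`. -/
lemma fourierCoeff_hilbertSymbol (m : ℤ) : fourierCoeff hilbertSymbol m = (m : ℂ)⁻¹ := by
  have h2πI : 2 * π * I ≠ 0 := by simp [pi_ne_zero]
  rw [hilbertSymbol, fourierCoeff_liftIoc_eq, fourierCoeffOn.const_mul]
  simp only [zero_add]
  rw [← bernoulliFourierCoeff, bernoulliFourierCoeff_eq one_ne_zero, Nat.factorial_one,
    Nat.cast_one, pow_one, neg_div, neg_mul_neg, mul_one_div]
  exact div_mul_cancel_left₀ h2πI _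

lemma norm_hilbertSymbol_le (t : UnitAddCircle) : ‖hilbertSymbol t‖ ≤ π := by
  obtain ⟨hs0, hs1⟩ := (equivIoc 1 0 t).2
  change ‖-(2 * π * I) * bernoulliFun 1 (equivIoc 1 0 t)‖ ≤ π
  have h2π : ‖-(2 * π * I)‖ = 2 * π := by simp [pi_pos.le]
  have hB : |bernoulliFun 1 (equivIoc 1 0 t)| ≤ 1 / 2 := by
    rw [bernoulliFun_one, abs_le]
    constructor <;> linarith
  rw [norm_mul, h2π, Complex.norm_real, Real.norm_eq_abs]
  nlinarith [pi_pos]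

lemma integrable_hilbertSymbol : Integrable hilbertSymbol haarAddCircle := by
  refine memLp_one_iff_integrable.mp (MemLp.haarAddCircle (MemLp.memLp_liftIoc ?_))
  exact memLp_one_iff_integrable.mpr (by fun_prop : Continuous _).integrableOn_Ioc

lemma hilbertMatrix_eq_toeplitzMatrix (n : ℕ) :
    hilbertMatrix n = toeplitzMatrix hilbertSymbol n := by
  ext i j
  by_cases h : i = j <;> simp [hilbertMatrix, toeplitzMatrix, fourierCoeff_hilbertSymbol, h]

end

theorem hilbertMatrix_opNorm_le_pi_general (n : ℕ) :
    opNorm (hilbertMatrix n) ≤ Real.pi := by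
  rw [hilbertMatrix_eq_toeplitzMatrix]
  exact opNorm_toeplitzMatrix_le integrable_hilbertSymbol norm_hilbertSymbol_le

/-- Hilbert's inequality: the operator norm of the Hilbert matrix is at most `π`. -/
theorem hilbertMatrix_opNorm_le_pi (n : ℕ) (hn : 1 ≤ n) :
    opNorm (hilbertMatrix n) ≤ Real.pi :=
  hilbertMatrix_opNorm_le_pi_general n
end

section
/- Let A_n ∈ M_n(ℂ) have entries (A_n)_{ii} = 0 and (A_n)_{ij} = 1/(i−j) for i ≠ j, and let T(A_n) be its triangular transform, with entries sgn(i−j)/(i−j) = 1/|i−j| for i ≠ j and 0 on the diagonal. Then there exist constants c, C > 0, independent of n, such that for all n ≥ 2, c · log n ≤ ‖T(A_n)‖_∞ ≤ C · log n. -/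
/-- The triangular transform of the Hilbert matrix: zero diagonal and entries
`sgn(i-j)/(i-j) = 1/|i-j|` off the diagonal. -/
noncomputable def triangularHilbertMatrix (n : ℕ) : Matrix (Fin n) (Fin n) ℂ :=
  fun i j => if i = j then 0 else (((|(i : ℤ) - (j : ℤ)| : ℤ) : ℂ))⁻¹

/-!
The matrix is symmetric with nonnegative entries, and its `i`-th row sum is
`H i + H (n - 1 - i)`, `H` the harmonic numbers. As `log (m + 1) ≤ H m ≤ 1 + log m` and
`(i + 1) (n - i) ≥ n`, every row sum lies between `log n` and `2 (1 + log n)`.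
The Schur test (Cauchy–Schwarz with weights `‖b i j‖`) bounds the operator norm by the largest
row sum, and testing against the all-ones vector `𝟙` gives `n log n ≤ ⟪𝟙, A 𝟙⟫ ≤ n ‖A‖`.
-/

open Finset

namespace Matrix

variable {𝕜 ι : Type*} [RCLike 𝕜] [Fintype ι] [DecidableEq ι]

theorem norm_toEuclideanCLM_le_sqrt_of_sum_norm_le {r c : ℝ} (B : Matrix ι ι 𝕜)
    (hrow : ∀ i, ∑ j, ‖B i j‖ ≤ r) (hcol : ∀ j, ∑ i, ‖B i j‖ ≤ c) :
    ‖toEuclideanCLM (𝕜 := 𝕜) B‖ ≤ √(r * c) := by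
  rcases isEmpty_or_nonempty ι with hι | ⟨⟨i₀⟩⟩
  · rw [Subsingleton.elim (toEuclideanCLM (𝕜 := 𝕜) B) 0, norm_zero]
    positivity
  have hr : 0 ≤ r := (sum_nonneg fun j _ => norm_nonneg (B i₀ j)).trans (hrow i₀)
  refine ContinuousLinearMap.opNorm_le_bound _ (Real.sqrt_nonneg _) fun x => ?_
  rw [← Real.sqrt_sq (norm_nonneg x), ← Real.sqrt_mul' _ (sq_nonneg _)]
  refine Real.le_sqrt_of_sq_le ?_
  have hrow_sq (i : ι) :
      ‖∑ j, B i j * x j‖ ^ 2 ≤ r * ∑ j, ‖B i j‖ * ‖x j‖ ^ 2 := by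
    calc ‖∑ j, B i j * x j‖ ^ 2 ≤ (∑ j, ‖B i j‖ * ‖x j‖) ^ 2 := by
          gcongr
          exact (norm_sum_le _ _).trans_eq (by simp only [norm_mul])
      _ ≤ (∑ j, ‖B i j‖) * ∑ j, ‖B i j‖ * ‖x j‖ ^ 2 :=
          sum_sq_le_sum_mul_sum_of_sq_le_mul _ (fun _ _ => norm_nonneg _)
            (fun _ _ => by positivity) (fun _ _ => le_of_eq (by ring))
      _ ≤ r * ∑ j, ‖B i j‖ * ‖x j‖ ^ 2 := by gcongr; exact hrow i
  calc ‖toEuclideanCLM (𝕜 := 𝕜) B x‖ ^ 2 = ∑ i, ‖∑ j, B i j * x j‖ ^ 2 := by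
        simp [EuclideanSpace.norm_sq_eq, mulVec, dotProduct]
    _ ≤ ∑ i, r * ∑ j, ‖B i j‖ * ‖x j‖ ^ 2 := sum_le_sum fun i _ => hrow_sq i
    _ = r * ∑ j, (∑ i, ‖B i j‖) * ‖x j‖ ^ 2 := by
        simp only [← mul_sum, sum_mul]; rw [sum_comm]
    _ ≤ r * ∑ j, c * ‖x j‖ ^ 2 := by gcongr with j; exact hcol j
    _ = r * c * ‖x‖ ^ 2 := by rw [← mul_sum, EuclideanSpace.norm_sq_eq, mul_assoc]

theorem norm_sum_sum_le_card_mul_norm_toEuclideanCLM (B : Matrix ι ι 𝕜) :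
    ‖∑ i, ∑ j, B i j‖ ≤ Fintype.card ι * ‖toEuclideanCLM (𝕜 := 𝕜) B‖ := by
  set x : EuclideanSpace 𝕜 ι := WithLp.toLp 2 (fun _ => 1)
  have hx : ‖x‖ ^ 2 = Fintype.card ι := by simp [x, EuclideanSpace.norm_sq_eq]
  have hinner : inner 𝕜 x (toEuclideanCLM (𝕜 := 𝕜) B x) = ∑ i, ∑ j, B i j := by
    simp [x, PiLp.inner_apply, mulVec, dotProduct]
  calc ‖∑ i, ∑ j, B i j‖ ≤ ‖x‖ * ‖toEuclideanCLM (𝕜 := 𝕜) B x‖ :=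
        hinner ▸ norm_inner_le_norm _ _
    _ ≤ ‖x‖ * (‖toEuclideanCLM (𝕜 := 𝕜) B‖ * ‖x‖) := by
        gcongr; exact ContinuousLinearMap.le_opNorm _ _
    _ = Fintype.card ι * ‖toEuclideanCLM (𝕜 := 𝕜) B‖ := by rw [← hx]; ring

end Matrix

theorem sum_range_natAbs_sub {M : Type*} [AddCommMonoid M] (f : ℕ → M) {i n : ℕ}
    (hi : i ≤ n) :
    ∑ j ∈ range n, f ((i : ℤ) - j).natAbs =
      ∑ k ∈ range i, f (k + 1) + ∑ k ∈ range (n - i), f k := by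
  rw [← sum_range_add_sum_Ico _ hi, sum_Ico_eq_sum_range, ← sum_range_reflect]
  congr 1 <;> refine sum_congr rfl fun k hk => congrArg f ?_ <;> rw [mem_range] at hk <;> omega

theorem sum_range_inv_natAbs_sub {i n : ℕ} (hi : i < n) :
    ∑ j ∈ range n, (((i : ℤ) - j).natAbs : ℝ)⁻¹ = harmonic i + harmonic (n - 1 - i) := by
  rw [sum_range_natAbs_sub (fun k => (k : ℝ)⁻¹) hi.le, show n - i = n - 1 - i + 1 by omega,
    sum_range_succ']
  simp [harmonic]

theorem log_le_harmonic_add_harmonic {i n : ℕ} (hi : i < n) :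
    Real.log n ≤ harmonic i + harmonic (n - 1 - i) := by
  have hprod : n ≤ (i + 1) * (n - 1 - i + 1) := by
    obtain ⟨m, rfl⟩ := Nat.exists_eq_add_of_lt hi
    rw [show i + m + 1 - 1 - i + 1 = m + 1 by omega]
    nlinarith
  calc Real.log n ≤ Real.log (↑(i + 1) * ↑(n - 1 - i + 1)) := by
        gcongr
        · exact Nat.cast_pos.2 (by omega)
        · exact_mod_cast hprod
    _ = Real.log ↑(i + 1) + Real.log ↑(n - 1 - i + 1) :=
        Real.log_mul (by positivity) (by positivity)
    _ ≤ harmonic i + harmonic (n - 1 - i) :=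
        add_le_add (log_add_one_le_harmonic i) (log_add_one_le_harmonic _)

theorem harmonic_le_one_add_log_of_le {m n : ℕ} (h : m ≤ n) :
    (harmonic m : ℝ) ≤ 1 + Real.log n := by
  refine (harmonic_le_one_add_log m).trans ?_
  rcases m.eq_zero_or_pos with rfl | hm
  · simp [Real.log_natCast_nonneg]
  · gcongr

theorem triangularHilbertMatrix_apply (n : ℕ) (i j : Fin n) :
    triangularHilbertMatrix n i j = ((((i : ℤ) - j).natAbs : ℝ)⁻¹ : ℝ) := by
  unfold triangularHilbertMatrix
  split_ifs with h
  · simp [h]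
  · rw [Nat.cast_natAbs, Complex.ofReal_inv, Complex.ofReal_intCast]

theorem isSymm_triangularHilbertMatrix (n : ℕ) : (triangularHilbertMatrix n).IsSymm :=
  Matrix.IsSymm.ext fun i j => by
    simp only [triangularHilbertMatrix_apply, ← Int.natAbs_neg ((i : ℤ) - j), neg_sub]

theorem sum_norm_triangularHilbertMatrix (n : ℕ) (i : Fin n) :
    ∑ j, ‖triangularHilbertMatrix n i j‖ = harmonic i + harmonic (n - 1 - i) := by
  simp only [triangularHilbertMatrix_apply, Complex.norm_real,
    Real.norm_of_nonneg (inv_nonneg.2 (Nat.cast_nonneg _))]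
  rw [Fin.sum_univ_eq_sum_range (fun j => (((i : ℤ) - j).natAbs : ℝ)⁻¹),
    sum_range_inv_natAbs_sub i.isLt]

theorem sum_sum_triangularHilbertMatrix (n : ℕ) :
    ∑ i, ∑ j, triangularHilbertMatrix n i j =
      ((∑ i : Fin n, (harmonic i + harmonic (n - 1 - i)) : ℝ) : ℂ) := by
  simp only [← sum_norm_triangularHilbertMatrix, triangularHilbertMatrix_apply,
    Complex.ofReal_sum, Complex.norm_real, Real.norm_of_nonneg (inv_nonneg.2 (Nat.cast_nonneg _))]

theorem sum_norm_triangularHilbertMatrix_le (n : ℕ) (i : Fin n) :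
    ∑ j, ‖triangularHilbertMatrix n i j‖ ≤ 2 * (1 + Real.log n) := by
  rw [sum_norm_triangularHilbertMatrix]
  linarith [harmonic_le_one_add_log_of_le i.isLt.le,
    harmonic_le_one_add_log_of_le (show n - 1 - i ≤ n by omega)]

/-- Kwapień–Pełczyński: the triangular transform of the Hilbert matrix has operator
norm of the order `log n`. -/
theorem triangularHilbertMatrix_opNorm_log :
    ∃ c C : ℝ, 0 < c ∧ 0 < C ∧ ∀ n : ℕ, 2 ≤ n →
      c * Real.log n ≤ opNorm (triangularHilbertMatrix n) ∧
        opNorm (triangularHilbertMatrix n) ≤ C * Real.log n := by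
  refine ⟨1, 6, one_pos, by norm_num, fun n hn => ⟨?_, ?_⟩⟩
  · have hcard :=
      Matrix.norm_sum_sum_le_card_mul_norm_toEuclideanCLM (triangularHilbertMatrix n)
    rw [sum_sum_triangularHilbertMatrix, Complex.norm_real, Real.norm_eq_abs,
      Fintype.card_fin] at hcard
    have hrows : n * Real.log n ≤ ∑ i : Fin n, (harmonic i + harmonic (n - 1 - i) : ℝ) := by
      simpa using
        sum_le_sum fun (i : Fin n) (_ : i ∈ univ) => log_le_harmonic_add_harmonic i.isLt
    rw [one_mul]
    exact le_of_mul_le_mul_left (hrows.trans ((le_abs_self _).trans hcard)) (by positivity)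
  · have hnorm := Matrix.norm_toEuclideanCLM_le_sqrt_of_sum_norm_le _
      (sum_norm_triangularHilbertMatrix_le n) fun j => by
        simpa only [(isSymm_triangularHilbertMatrix n).apply] using
          sum_norm_triangularHilbertMatrix_le n j
    have hlog2 : 1 ≤ 2 * Real.log n := by
      have : Real.log 2 ≤ Real.log n := Real.log_le_log two_pos (by exact_mod_cast hn)
      linarith [Real.log_two_gt_d9]
    rw [Real.sqrt_mul_self (by linarith)] at hnorm
    unfold opNorm
    linarith
end
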